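/- Let $E:\mathcal{E}\to\mathcal{E}$ be a linear map with $E^2=\mathrm{Id}$ on a Leibniz algebra $(\mathcal{E},[\cdot,\cdot])$ satisfying $[x,y]=-[Ex,Ey]$ for all $x,y$. Then $E$ is a product structure, i.e. $E[x,y]=[Ex,y]+[x,Ey]-E[Ex,Ey]$ holds. Moreover, such an abelian product structure exists if and only if $\mathcal{E}=\mathcal{E}_+\oplus\mathcal{E}_-$ where $\mathcal{E}_+,\mathcal{E}_-$ are abelian subalgebras. -/

import Mathlib

/-!
An involution `P` splits the module into its `±1`-eigenspaces once `2` is invertible. On two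
vectors of the same eigenspace the identity `[x, y] = -[P x, P y]` reads `[x, y] = -[x, y]`, so
both eigenspaces are abelian. Conversely, for a splitting `p ⊕ q` into abelian subalgebras, the
reflection `a + b ↦ a - b` satisfies `[x, y] = -[P x, P y]`: only the mixed brackets `[a, d]` and
`[b, c]` survive, and each of them changes sign under `P`.
-/

theorem eq_zero_of_eq_neg_of_invertible_two (R : Type*) {M : Type*} [Semiring R]
    [Invertible (2 : R)] [AddCommGroup M] [Module R M] {x : M} (h : x = -x) : x = 0 := by
  have htwo : (2 : R) • x = 0 := by
    rw [two_smul]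
    nth_rewrite 1 [h]
    exact neg_add_cancel x
  rw [← invOf_smul_smul (2 : R) x, htwo, smul_zero]

section Involution

variable {R M : Type*} [Semiring R] [AddCommGroup M] [Module R M] {P : Module.End R M}

theorem Module.End.involutive_of_mul_self_eq_one (hP : P * P = 1) : Function.Involutive P :=
  LinearMap.congr_fun hP

theorem mem_ker_sub_one_iff {x : M} : x ∈ LinearMap.ker (P - 1) ↔ P x = x := by
  rw [LinearMap.mem_ker, LinearMap.sub_apply, Module.End.one_apply, sub_eq_zero]

theorem mem_ker_add_one_iff {x : M} : x ∈ LinearMap.ker (P + 1) ↔ P x = -x := by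
  rw [LinearMap.mem_ker, LinearMap.add_apply, Module.End.one_apply, add_eq_zero_iff_eq_neg]

theorem isCompl_ker_sub_one_ker_add_one [Invertible (2 : R)] (hP : P * P = 1) :
    IsCompl (LinearMap.ker (P - 1)) (LinearMap.ker (P + 1)) := by
  have hinv := Module.End.involutive_of_mul_self_eq_one hP
  constructor
  · rw [Submodule.disjoint_def]
    intro x hplus hminus
    rw [mem_ker_sub_one_iff] at hplus
    rw [mem_ker_add_one_iff] at hminus
    exact eq_zero_of_eq_neg_of_invertible_two R (hplus.symm.trans hminus)
  · rw [codisjoint_iff, eq_top_iff]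
    intro x _
    refine Submodule.mem_sup.mpr ⟨(⅟2 : R) • (x + P x), ?_, (⅟2 : R) • (x - P x), ?_, ?_⟩
    · rw [mem_ker_sub_one_iff, map_smul, map_add, hinv x, add_comm]
    · rw [mem_ker_add_one_iff, map_smul, map_sub, hinv x, ← smul_neg, neg_sub]
    · rw [← smul_add, add_add_sub_cancel, ← two_smul R x, smul_smul, invOf_mul_self, one_smul]

end Involution

section Reflection

variable {R M : Type*} [Ring R] [AddCommGroup M] [Module R M] {p q : Submodule R M}

noncomputable def Submodule.reflectionOfIsCompl (h : IsCompl p q) : Module.End R M :=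
  LinearMap.ofIsCompl h p.subtype (-q.subtype)

theorem Submodule.reflectionOfIsCompl_add (h : IsCompl p q) (a : p) (b : q) :
    reflectionOfIsCompl h (a + b) = a - b := by
  rw [reflectionOfIsCompl, map_add, LinearMap.ofIsCompl_apply_left,
    LinearMap.ofIsCompl_apply_right, LinearMap.neg_apply, Submodule.subtype_apply,
    Submodule.subtype_apply, sub_eq_add_neg]

theorem Submodule.reflectionOfIsCompl_mul_self (h : IsCompl p q) :
    reflectionOfIsCompl h * reflectionOfIsCompl h = 1 := by
  ext x
  obtain ⟨a, b, rfl, -⟩ := Submodule.existsUnique_add_of_isCompl h x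
  rw [Module.End.mul_apply, reflectionOfIsCompl_add, sub_eq_add_neg, ← Submodule.coe_neg,
    reflectionOfIsCompl_add, Submodule.coe_neg, sub_neg_eq_add, Module.End.one_apply]

end Reflection

section Bracket

variable {R M : Type*} [CommRing R] [AddCommGroup M] [Module R M] (br : M →ₗ[R] M →ₗ[R] M)

theorem map_bracket_eq_of_bracket_eq_neg {P : Module.End R M} (hP : P * P = 1)
    (hanti : ∀ x y, br x y = -br (P x) (P y)) (x y : M) :
    P (br x y) = br (P x) y + br x (P y) - P (br (P x) (P y)) := by
  have hinv := Module.End.involutive_of_mul_self_eq_one hP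
  have hleft : br (P x) y = -br x (P y) := by rw [hanti (P x) y, hinv x]
  have hboth : br (P x) (P y) = -br x y := by rw [hanti x y, neg_neg]
  rw [hleft, hboth, map_neg]
  abel

theorem bracket_eq_zero_of_bracket_map_eq [Invertible (2 : R)] {P : Module.End R M}
    (hanti : ∀ x y, br x y = -br (P x) (P y)) {x y : M} (h : br (P x) (P y) = br x y) :
    br x y = 0 :=
  eq_zero_of_eq_neg_of_invertible_two R (h ▸ hanti x y)

theorem exists_isCompl_of_bracket_eq_neg [Invertible (2 : R)] {P : Module.End R M}
    (hP : P * P = 1) (hanti : ∀ x y, br x y = -br (P x) (P y)) :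
    ∃ p q : Submodule R M, IsCompl p q ∧
      (∀ x ∈ p, ∀ y ∈ p, br x y = 0) ∧ (∀ x ∈ q, ∀ y ∈ q, br x y = 0) := by
  refine ⟨_, _, isCompl_ker_sub_one_ker_add_one hP, fun x hx y hy => ?_, fun x hx y hy => ?_⟩
  · rw [mem_ker_sub_one_iff] at hx hy
    exact bracket_eq_zero_of_bracket_map_eq br hanti (by rw [hx, hy])
  · rw [mem_ker_add_one_iff] at hx hy
    exact bracket_eq_zero_of_bracket_map_eq br hanti (by
      simp only [hx, hy, map_neg, LinearMap.neg_apply, neg_neg])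

theorem bracket_eq_neg_bracket_reflectionOfIsCompl {p q : Submodule R M} (h : IsCompl p q)
    (hp : ∀ x ∈ p, ∀ y ∈ p, br x y = 0) (hq : ∀ x ∈ q, ∀ y ∈ q, br x y = 0) (x y : M) :
    br x y = -br (p.reflectionOfIsCompl h x) (p.reflectionOfIsCompl h y) := by
  obtain ⟨a, b, rfl, -⟩ := Submodule.existsUnique_add_of_isCompl h x
  obtain ⟨c, d, rfl, -⟩ := Submodule.existsUnique_add_of_isCompl h y
  rw [Submodule.reflectionOfIsCompl_add, Submodule.reflectionOfIsCompl_add]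
  simp only [map_add, map_sub, LinearMap.add_apply, LinearMap.sub_apply,
    hp a a.2 c c.2, hq b b.2 d d.2]
  abel

end Bracket

theorem stmt11_general {K E : Type*} [Field K] [CharZero K] [AddCommGroup E] [Module K E]
    (br : E →ₗ[K] E →ₗ[K] E) :
    (∀ P : Module.End K E, P * P = 1 → (∀ x y : E, br x y = -br (P x) (P y)) →
      ∀ x y : E, P (br x y) = br (P x) y + br x (P y) - P (br (P x) (P y))) ∧
    ((∃ P : Module.End K E, P * P = 1 ∧ ∀ x y : E, br x y = -br (P x) (P y)) ↔
      ∃ p q : Submodule K E, IsCompl p q ∧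
        (∀ x ∈ p, ∀ y ∈ p, br x y = 0) ∧ (∀ x ∈ q, ∀ y ∈ q, br x y = 0)) := by
  have : Invertible (2 : K) := invertibleOfNonzero two_ne_zero
  refine ⟨fun P hP hanti => map_bracket_eq_of_bracket_eq_neg br hP hanti, ?_, ?_⟩
  · rintro ⟨P, hP, hanti⟩
    exact exists_isCompl_of_bracket_eq_neg br hP hanti
  · rintro ⟨p, q, h, hp, hq⟩
    exact ⟨p.reflectionOfIsCompl h, p.reflectionOfIsCompl_mul_self h,
      bracket_eq_neg_bracket_reflectionOfIsCompl br h hp hq⟩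

/-- An almost product structure with [x,y] = -[Ex,Ey] is a product structure
(an abelian product structure), and such a structure exists iff the Leibniz
algebra decomposes as a direct sum of two abelian subalgebras. -/
theorem stmt11 {K E : Type*} [Field K] [CharZero K] [AddCommGroup E] [Module K E]
    (br : E →ₗ[K] E →ₗ[K] E)
    (hbr : ∀ x y z : E, br x (br y z) = br (br x y) z + br y (br x z)) :
    (∀ P : Module.End K E, P * P = 1 → (∀ x y : E, br x y = -br (P x) (P y)) →
      ∀ x y : E, P (br x y) = br (P x) y + br x (P y) - P (br (P x) (P y))) ∧
    ((∃ P : Module.End K E, P * P = 1 ∧ ∀ x y : E, br x y = -br (P x) (P y)) ↔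
      ∃ p q : Submodule K E, IsCompl p q ∧
        (∀ x ∈ p, ∀ y ∈ p, br x y = 0) ∧ (∀ x ∈ q, ∀ y ∈ q, br x y = 0)) :=
  stmt11_general br
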